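/- arXiv:1506.08744 — 5 statements merged into one kernel-verified Lean document; each statement's English description precedes it below -/
import Mathlib

section
/- There exists ε > 0 and a function F : ℂ → ℂ that is analytic on the open horizontal strip {ζ ∈ ℂ : |Im ζ| < ε} and satisfies F(ξ) = L̂_k(ξ) for every real ξ; that is, the Fourier transform of the fundamental function of k-hyperbolic cardinal spline interpolation extends analytically to a strip around the real axis. -/
open MeasureTheory Filter
open scoped ENNReal

noncomputable def S (α : ℝ) (k : ℕ) (ξ : ℝ) : ℝ :=
  ∑' j : ℤ, (((ξ - 2 * Real.pi * j) ^ 2 + α ^ 2) ^ k)⁻¹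

noncomputable def Lhat (α : ℝ) (k : ℕ) (ξ : ℝ) : ℝ :=
  (Real.sqrt (2 * Real.pi))⁻¹ * ((ξ ^ 2 + α ^ 2) ^ k)⁻¹ / S α k ξ

noncomputable def Lk (α : ℝ) (k : ℕ) (x : ℝ) : ℝ :=
  (((Real.sqrt (2 * Real.pi) : ℂ))⁻¹ *
    ∫ ξ : ℝ, (Lhat α k ξ : ℂ) * Complex.exp (Complex.I * x * ξ)).re

/-! The series `∑ⱼ ((ζ - 2πj)² + α²)⁻ᵏ` converges locally uniformly on the strip `|Im ζ| < α`,
its terms being `O(j⁻²)` there, so it is a holomorphic, `2π`-periodic extension of `S`. As `S > 0`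
on `ℝ`, periodicity and compactness of `[0, 2π]` give a thinner strip on which the extension has no
zeros, and on it `(2π)^(-1/2) (ζ² + α²)⁻ᵏ` divided by the extension is holomorphic and equals
`L̂_k` on `ℝ`. -/

namespace CardinalSpline

open Complex Real

def strip (ε : ℝ) : Set ℂ := {ζ | |ζ.im| < ε}

theorem isOpen_strip (ε : ℝ) : IsOpen (strip ε) :=
  isOpen_lt (continuous_abs.comp continuous_im) continuous_const

/-- Compactness of `[0, c]` gives a uniform thickness, and periodicity spreads it along `ℝ`. -/
theorem exists_strip_subset_of_isOpen {U : Set ℂ} (hU : IsOpen U) {c : ℝ} (hc : 0 < c)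
    (hreal : ∀ x : ℝ, (x : ℂ) ∈ U) (hper : ∀ ζ ∈ U, ∀ n : ℤ, ζ + ((n * c : ℝ) : ℂ) ∈ U) :
    ∃ ε > 0, strip ε ⊆ U := by
  have hK : IsCompact (((↑) : ℝ → ℂ) '' Set.Icc 0 c) :=
    isCompact_Icc.image continuous_ofReal
  obtain ⟨ε, hε, hthick⟩ := hK.exists_thickening_subset_open hU
    (Set.image_subset_iff.mpr fun x _ => hreal x)
  refine ⟨ε, hε, fun ζ hζ => ?_⟩
  obtain ⟨n, hn⟩ : ∃ n : ℤ, ζ.re - n * c ∈ Set.Ico 0 c := by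
    refine ⟨toIcoDiv hc 0 ζ.re, ?_⟩
    have h := toIcoMod_mem_Ico' hc ζ.re
    rwa [← self_sub_toIcoDiv_zsmul, zsmul_eq_mul] at h
  set ζ' := ζ - ((n * c : ℝ) : ℂ)
  have hζ' : ζ' ∈ U := by
    refine hthick (Metric.mem_thickening_iff.mpr ⟨ζ'.re, ⟨ζ'.re, ?_, rfl⟩, ?_⟩)
    · simpa [ζ'] using Set.Ico_subset_Icc_self hn
    · rw [dist_of_re_eq (by simp), Real.dist_eq]
      simpa [ζ', strip] using hζ
  simpa [ζ'] using hper ζ' hζ' n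

noncomputable def weight (α : ℝ) (k : ℕ) (z : ℂ) : ℂ := ((z ^ 2 + (α : ℂ) ^ 2) ^ k)⁻¹

noncomputable def periodizedWeight (α : ℝ) (k : ℕ) (ζ : ℂ) : ℂ :=
  ∑' j : ℤ, weight α k (ζ - 2 * π * j)

variable {α : ℝ} {k : ℕ}

theorem re_sq_add_ofReal_sq (z : ℂ) (a : ℝ) :
    (z ^ 2 + (a : ℂ) ^ 2).re = z.re ^ 2 - z.im ^ 2 + a ^ 2 := by
  simp [sq]

theorem differentiableAt_weight {z : ℂ} (hz : |z.im| < α) :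
    DifferentiableAt ℂ (weight α k) z := by
  have hne : z ^ 2 + (α : ℂ) ^ 2 ≠ 0 := by
    refine fun h => (?_ : 0 < (z ^ 2 + (α : ℂ) ^ 2).re).ne' (by rw [h, zero_re])
    rw [re_sq_add_ofReal_sq]
    nlinarith [sq_lt_sq' (neg_lt_of_abs_lt hz) (lt_of_abs_lt hz), sq_nonneg z.re]
  exact ((differentiableAt_id.pow 2).add_const _ |>.pow k).inv (pow_ne_zero k hne)

theorem norm_weight_le (hk : k ≠ 0) {z : ℂ} (him : |z.im| ≤ α) (hre : 1 ≤ z.re ^ 2) :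
    ‖weight α k z‖ ≤ 1 / z.re ^ 2 := by
  set w := z ^ 2 + (α : ℂ) ^ 2
  have hw : z.re ^ 2 ≤ ‖w‖ := by
    refine le_trans ?_ (re_le_norm w)
    rw [re_sq_add_ofReal_sq]
    nlinarith [sq_le_sq' (neg_le_of_abs_le him) (le_of_abs_le him)]
  calc ‖weight α k z‖ = (‖w‖ ^ k)⁻¹ := by rw [weight, norm_inv, norm_pow]
    _ ≤ ‖w‖⁻¹ := inv_anti₀ (by linarith) (le_self_pow₀ (by linarith) hk)
    _ ≤ 1 / z.re ^ 2 := by rw [one_div]; exact inv_anti₀ (by linarith) hw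

theorem eventually_norm_weight_sub_le (hk : k ≠ 0) (R : ℝ) :
    ∀ᶠ j : ℤ in Filter.cofinite, ∀ ζ : ℂ, |ζ.im| ≤ α → |ζ.re| ≤ R →
      ‖weight α k (ζ - 2 * π * j)‖ ≤ 1 / (j : ℝ) ^ 2 := by
  have hlarge : ∀ᶠ j : ℤ in Filter.cofinite, R + 1 ≤ |(j : ℝ)| :=
    (tendsto_norm_cocompact_atTop.comp Int.tendsto_coe_cofinite).eventually_ge_atTop (R + 1)
  filter_upwards [hlarge] with j hj ζ him hre
  have hshift : |(j : ℝ)| ≤ |ζ.re - 2 * π * j| := by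
    have := abs_sub_abs_le_abs_sub (2 * π * j) ζ.re
    rw [abs_sub_comm, abs_mul, abs_of_pos two_pi_pos] at this
    nlinarith [pi_gt_three, abs_nonneg (j : ℝ)]
  have hj2 : (j : ℝ) ^ 2 ≤ (ζ.re - 2 * π * j) ^ 2 := sq_le_sq.mpr hshift
  have hj1 : 1 ≤ (j : ℝ) ^ 2 := one_le_sq_iff_one_le_abs _ |>.mpr (by linarith [abs_nonneg ζ.re])
  calc ‖weight α k (ζ - 2 * π * j)‖ ≤ 1 / (ζ.re - 2 * π * j) ^ 2 := by
        simpa using norm_weight_le hk (z := ζ - 2 * π * j) (by simpa using him)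
          (by simpa using hj1.trans hj2)
    _ ≤ 1 / (j : ℝ) ^ 2 := one_div_le_one_div_of_le (by positivity) hj2

theorem summable_one_div_int_sq : Summable fun j : ℤ => 1 / (j : ℝ) ^ 2 :=
  Real.summable_one_div_int_pow.mpr one_lt_two

theorem summableLocallyUniformlyOn_weight_sub (hk : k ≠ 0) :
    SummableLocallyUniformlyOn (fun (j : ℤ) ζ => weight α k (ζ - 2 * π * j)) (strip α) := by
  refine .of_locally_bounded_eventually (isOpen_strip α) fun K hK hKc => ?_
  obtain ⟨R, hR⟩ := hKc.isBounded.exists_norm_le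
  refine ⟨_, summable_one_div_int_sq, ?_⟩
  filter_upwards [eventually_norm_weight_sub_le hk R] with j hj ζ hζ
  exact hj ζ (hK hζ).le ((abs_re_le_norm ζ).trans (hR ζ hζ))

theorem differentiableOn_periodizedWeight (hk : k ≠ 0) :
    DifferentiableOn ℂ (periodizedWeight α k) (strip α) :=
  (summableLocallyUniformlyOn_weight_sub hk).differentiableOn (isOpen_strip α)
    fun _ ζ hζ => (differentiableAt_weight (by simpa [strip] using hζ)).comp ζ
      (differentiableAt_id.sub_const _)

theorem summable_weight_sub (hk : k ≠ 0) {ζ : ℂ} (hζ : |ζ.im| ≤ α) :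
    Summable fun j : ℤ => weight α k (ζ - 2 * π * j) :=
  summable_one_div_int_sq.of_norm_bounded_eventually <|
    (eventually_norm_weight_sub_le hk |ζ.re|).mono fun _ hj => hj ζ hζ le_rfl

theorem periodizedWeight_ofReal (ξ : ℝ) : periodizedWeight α k ξ = S α k ξ := by
  rw [periodizedWeight, S, ofReal_tsum]
  refine tsum_congr fun j => ?_
  simp [weight]

theorem S_pos (hα : 0 < α) (hk : k ≠ 0) (ξ : ℝ) : 0 < S α k ξ := by
  have hsum : Summable fun j : ℤ => (((ξ - 2 * π * j) ^ 2 + α ^ 2) ^ k)⁻¹ := by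
    rw [← summable_ofReal]
    refine (summable_weight_sub hk (ζ := ξ) (by simpa using hα.le)).congr fun j => ?_
    simp [weight]
  exact hsum.tsum_pos (fun j => by positivity) 0 (by positivity)

theorem periodic_periodizedWeight : Function.Periodic (periodizedWeight α k) (2 * π) := by
  intro ζ
  rw [periodizedWeight, periodizedWeight, ← (Equiv.addRight 1).tsum_eq]
  refine tsum_congr fun j => ?_
  simp only [Equiv.coe_addRight]
  push_cast
  ring_nf

theorem exists_strip_subset_periodizedWeight_ne_zero (hα : 0 < α) (hk : k ≠ 0) :
    ∃ ε > 0, strip ε ⊆ strip α ∩ {ζ | periodizedWeight α k ζ ≠ 0} := by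
  refine exists_strip_subset_of_isOpen
    ((differentiableOn_periodizedWeight hk).continuousOn.isOpen_inter_preimage (isOpen_strip α)
      isOpen_compl_singleton) two_pi_pos (fun x => ⟨by simpa [strip] using hα, ?_⟩)
    fun ζ hζ n => ⟨by simpa [strip] using hζ.1, ?_⟩
  · simpa [periodizedWeight_ofReal] using (S_pos hα hk x).ne'
  · have := (periodic_periodizedWeight (α := α) (k := k)).int_mul n ζ
    push_cast at this ⊢
    simpa [this] using hζ.2

end CardinalSpline

open CardinalSpline in
/-- The Fourier transform of the fundamental function of k-hyperbolic
cardinal spline interpolation extends analytically to a strip around the real axis. -/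
theorem stmt_0 (α : ℝ) (hα : 0 < α) (k : ℕ) (hk : 1 ≤ k) :
    ∃ ε > (0 : ℝ), ∃ F : ℂ → ℂ,
      AnalyticOnNhd ℂ F {ζ : ℂ | |ζ.im| < ε} ∧
      ∀ ξ : ℝ, F ξ = (Lhat α k ξ : ℂ) := by
  have hk0 : k ≠ 0 := Nat.one_le_iff_ne_zero.mp hk
  obtain ⟨ε, hε, hsub⟩ := exists_strip_subset_periodizedWeight_ne_zero hα hk0
  refine ⟨ε, hε, fun ζ => (Real.sqrt (2 * Real.pi) : ℂ)⁻¹ * weight α k ζ / periodizedWeight α k ζ,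
    DifferentiableOn.analyticOnNhd (fun ζ hζ => ?_) (isOpen_strip ε), fun ξ => ?_⟩
  · obtain ⟨hζα, hne⟩ := hsub hζ
    have hS := (differentiableOn_periodizedWeight hk0).differentiableAt
      ((isOpen_strip α).mem_nhds hζα)
    exact (((differentiableAt_const _).mul (differentiableAt_weight hζα)).div hS hne)
      |>.differentiableWithinAt
  · simp [Lhat, weight, periodizedWeight_ofReal]
end

section
/- There exists ε > 0 and a function G : ℂ → ℂ that is analytic on the open horizontal strip {ζ ∈ ℂ : |Im ζ| < ε} and satisfies G(ξ) = Φ̂_k(ξ) for every real ξ; in particular the 2π-periodic function Φ̂_k extends analytically to a strip around the real axis. -/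
open MeasureTheory Filter
open scoped ENNReal

noncomputable def Phihat (α : ℝ) (k : ℕ) (ξ : ℝ) : ℝ :=
  (-1 : ℝ) ^ k * (Real.sqrt (2 * Real.pi))⁻¹ / S α k ξ

/-!
For `|Im ζ| ≤ α / 2` the base `w = (ζ - 2πj)² + α²` of the `j`-th term has
`Re w ≥ (Re ζ - 2πj)² + α² / 2`, so the complexified series is dominated, locally uniformly,
by a shifted `∑ 1 / j²`; its sum is therefore holomorphic on the strip `|Im ζ| < α / 2`.
If moreover `4k |Im ζ| ≤ α`, then `k |Im w| < Re w`, so `|arg w| < π / (2k)` and every term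
`w⁻ᵏ` has positive real part. The sum thus does not vanish on that thinner strip, and
`(-1)ᵏ (2π)^(-1/2)` divided by it is the required extension of `Φ̂ₖ`.
-/

open Complex Metric
open scoped Real

lemma summable_inv_sub_mul_int_sq_add (x : ℝ) {p c : ℝ} (hp : p ≠ 0) (hc : 0 < c) :
    Summable fun j : ℤ => ((x - p * j) ^ 2 + c)⁻¹ := by
  -- `1 / |j - x / p| ^ 2` is the junk value `0` at the (at most one) `j` with `j = x / p`.
  refine Summable.of_norm_bounded_eventually
    (((Real.summable_one_div_int_add_rpow (-x / p) 2).mpr one_lt_two).mul_left (p ^ 2)⁻¹) ?_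
  have hzero : {j : ℤ | (j : ℝ) + -x / p = 0}.Subsingleton := fun i hi j hj => by
    exact_mod_cast (add_left_injective _ (hi.trans hj.symm) : (i : ℝ) = j)
  rw [Filter.eventually_cofinite]
  refine hzero.finite.subset fun j hj => by_contra fun hj0 => hj ?_
  have hj0 : (j : ℝ) + -x / p ≠ 0 := hj0
  have hx : (x - p * j) ^ 2 = p ^ 2 * ((j : ℝ) + -x / p) ^ 2 := by field_simp; ring
  rw [Real.norm_of_nonneg (by positivity), Real.rpow_two, sq_abs, hx, one_div, ← mul_inv]
  exact inv_anti₀ (by positivity) (le_add_of_nonneg_right hc.le)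

lemma inv_sub_sq_add_le_two_mul {x x₀ t c : ℝ} (hc : 0 < c) (h : (x - x₀) ^ 2 ≤ c / 2) :
    ((x - t) ^ 2 + c)⁻¹ ≤ 2 * ((x₀ - t) ^ 2 + c)⁻¹ := by
  rw [← div_eq_mul_inv, le_div_iff₀ (by positivity), ← div_eq_inv_mul,
    div_le_iff₀ (by positivity)]
  nlinarith [sq_nonneg (x - t + (x - x₀))]

lemma norm_inv_pow_succ_le {w : ℂ} {b c : ℝ} (hc : 0 < c) (hcb : c ≤ b) (hb : b ≤ w.re)
    (m : ℕ) : ‖(w ^ (m + 1))⁻¹‖ ≤ b⁻¹ * (c ^ m)⁻¹ := by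
  have hb0 : 0 < b := hc.trans_le hcb
  have hbw : b ≤ ‖w‖ := hb.trans (re_le_norm w)
  rw [norm_inv, norm_pow, pow_succ', ← mul_inv]
  exact inv_anti₀ (by positivity)
    (mul_le_mul hbw (pow_le_pow_left₀ hc.le (hcb.trans hbw) m) (by positivity) (by linarith))

lemma abs_arg_le_pi_div_two_mul {w : ℂ} (hre : 0 < w.re) :
    |arg w| ≤ π / 2 * (|w.im| / w.re) := by
  have hsin : |Real.sin (arg w)| ≤ |w.im| / w.re := by
    rw [sin_arg, abs_div, abs_norm]
    exact div_le_div_of_nonneg_left (abs_nonneg _) hre (re_le_norm w)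
  have := Real.mul_abs_le_abs_sin (abs_arg_le_pi_div_two_iff.mpr hre.le)
  rw [div_mul_eq_mul_div, div_le_iff₀ Real.pi_pos] at this
  nlinarith [Real.pi_pos]

lemma re_pow_pos_of_mul_abs_im_lt {w : ℂ} {n : ℕ} (hre : 0 < w.re) (h : n * |w.im| < w.re) :
    0 < (w ^ n).re := by
  have hw : w ≠ 0 := fun h => by simp [h] at hre
  have harg : |n * arg w| < π / 2 := by
    rw [abs_mul, Nat.abs_cast]
    calc (n : ℝ) * |arg w| ≤ n * (π / 2 * (|w.im| / w.re)) := by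
          gcongr; exact abs_arg_le_pi_div_two_mul hre
      _ = π / 2 * (n * |w.im| / w.re) := by ring
      _ < π / 2 * 1 := by gcongr; rwa [div_lt_one hre]
      _ = π / 2 := mul_one _
  have hpow : w ^ n = ((‖w‖ ^ n : ℝ) : ℂ) * exp (((n * arg w : ℝ)) * I) := by
    conv_lhs => rw [← norm_mul_exp_arg_mul_I w]
    rw [mul_pow, ← exp_nat_mul]
    push_cast
    ring_nf
  rw [hpow, re_ofReal_mul, exp_ofReal_mul_I_re]
  exact mul_pos (by positivity) (Real.cos_pos_of_mem_Ioo (abs_lt.mp harg))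

noncomputable def sTerm (α : ℝ) (k : ℕ) (j : ℤ) (ζ : ℂ) : ℂ :=
  (((ζ - (2 * π * j : ℝ)) ^ 2 + (α : ℂ) ^ 2) ^ k)⁻¹

noncomputable def complexS (α : ℝ) (k : ℕ) (ζ : ℂ) : ℂ :=
  ∑' j : ℤ, sTerm α k j ζ

lemma complexS_ofReal (α : ℝ) (k : ℕ) (ξ : ℝ) : complexS α k ξ = S α k ξ := by
  simp only [complexS, sTerm, S, ofReal_tsum]
  push_cast
  rfl

lemma re_sub_sq_add_sq (ζ : ℂ) (t α : ℝ) :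
    ((ζ - t) ^ 2 + (α : ℂ) ^ 2).re = (ζ.re - t) ^ 2 - ζ.im ^ 2 + α ^ 2 := by
  simp [sq]

lemma im_sub_sq_add_sq (ζ : ℂ) (t α : ℝ) :
    ((ζ - t) ^ 2 + (α : ℂ) ^ 2).im = 2 * ζ.im * (ζ.re - t) := by
  simp [sq]; ring

lemma differentiableAt_sTerm {α : ℝ} {ζ : ℂ} (h : |ζ.im| < α) (k : ℕ) (j : ℤ) :
    DifferentiableAt ℂ (sTerm α k j) ζ := by
  have hre : 0 < ((ζ - (2 * π * j : ℝ)) ^ 2 + (α : ℂ) ^ 2).re := by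
    rw [re_sub_sq_add_sq]
    nlinarith [sq_nonneg (ζ.re - 2 * π * j), sq_abs ζ.im, abs_nonneg ζ.im]
  have hne : (ζ - (2 * π * j : ℝ)) ^ 2 + (α : ℂ) ^ 2 ≠ 0 := fun h0 =>
    hre.ne' (by rw [h0, zero_re])
  unfold sTerm
  fun_prop (disch := exact pow_ne_zero _ hne)

lemma norm_sTerm_le {α : ℝ} (hα : 0 < α) {k : ℕ} (hk : k ≠ 0) (j : ℤ) {ζ : ℂ}
    (h : |ζ.im| ≤ α / 2) :
    ‖sTerm α k j ζ‖ ≤ ((ζ.re - 2 * π * j) ^ 2 + α ^ 2 / 2)⁻¹ * ((α ^ 2 / 2) ^ (k - 1))⁻¹ := by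
  obtain ⟨m, rfl⟩ := Nat.exists_eq_add_one_of_ne_zero hk
  refine norm_inv_pow_succ_le (by positivity) (le_add_of_nonneg_left (sq_nonneg _)) ?_ m
  rw [re_sub_sq_add_sq]
  nlinarith [sq_abs ζ.im, abs_nonneg ζ.im]

lemma summable_sTerm {α : ℝ} (hα : 0 < α) {k : ℕ} (hk : k ≠ 0) {ζ : ℂ}
    (h : |ζ.im| ≤ α / 2) : Summable fun j : ℤ => sTerm α k j ζ :=
  .of_norm_bounded
    ((summable_inv_sub_mul_int_sq_add ζ.re (by positivity) (by positivity)).mul_right _)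
    fun j => norm_sTerm_le hα hk j h

lemma differentiableOn_complexS_ball {α : ℝ} (hα : 0 < α) {k : ℕ} (hk : k ≠ 0) (ζ₀ : ℂ) :
    DifferentiableOn ℂ (complexS α k) (ball ζ₀ (α / 2 - |ζ₀.im|)) := by
  have hball : ∀ ζ ∈ ball ζ₀ (α / 2 - |ζ₀.im|), |ζ.im| < α / 2 ∧ |ζ.re - ζ₀.re| < α / 2 := by
    intro ζ hζ
    rw [mem_ball, dist_eq] at hζ
    have him := (abs_im_le_norm (ζ - ζ₀)).trans_lt hζ
    have hre := (abs_re_le_norm (ζ - ζ₀)).trans_lt hζ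
    rw [sub_im] at him
    rw [sub_re] at hre
    constructor
    · linarith [abs_sub_abs_le_abs_sub ζ.im ζ₀.im]
    · linarith [abs_nonneg ζ₀.im]
  refine differentiableOn_tsum_of_summable_norm
    ((((summable_inv_sub_mul_int_sq_add ζ₀.re (p := 2 * π) (by positivity)
      (by positivity : 0 < α ^ 2 / 2)).mul_left 2).mul_right ((α ^ 2 / 2) ^ (k - 1))⁻¹))
    (fun j ζ hζ =>
      (differentiableAt_sTerm (by linarith [(hball ζ hζ).1]) k j).differentiableWithinAt)
    isOpen_ball fun j ζ hζ => ?_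
  obtain ⟨him, hre⟩ := hball ζ hζ
  have hshift := inv_sub_sq_add_le_two_mul (t := 2 * π * j) (by positivity : 0 < α ^ 2 / 2)
    (by nlinarith [sq_abs (ζ.re - ζ₀.re), abs_nonneg (ζ.re - ζ₀.re)] :
      (ζ.re - ζ₀.re) ^ 2 ≤ α ^ 2 / 2 / 2)
  exact (norm_sTerm_le hα hk j him.le).trans (by gcongr)

lemma analyticOnNhd_complexS {α : ℝ} (hα : 0 < α) {k : ℕ} (hk : k ≠ 0) :
    AnalyticOnNhd ℂ (complexS α k) {ζ : ℂ | |ζ.im| < α / 2} := by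
  refine DifferentiableOn.analyticOnNhd (fun ζ hζ => ?_)
    (isOpen_lt (continuous_abs.comp continuous_im) continuous_const)
  exact ((differentiableOn_complexS_ball hα hk ζ).differentiableAt
    (ball_mem_nhds ζ (sub_pos.mpr hζ))).differentiableWithinAt

lemma re_sTerm_pos {α : ℝ} (hα : 0 < α) {k : ℕ} (hk : k ≠ 0) (j : ℤ) {ζ : ℂ}
    (h : 4 * k * |ζ.im| ≤ α) : 0 < (sTerm α k j ζ).re := by
  set a := ζ.re - 2 * π * j
  have hk1 : (1 : ℝ) ≤ k := by exact_mod_cast Nat.one_le_iff_ne_zero.mpr hk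
  have hy : |ζ.im| ≤ α / 4 := by nlinarith [abs_nonneg ζ.im]
  have hre : 0 < ((ζ - (2 * π * j : ℝ)) ^ 2 + (α : ℂ) ^ 2).re := by
    rw [re_sub_sq_add_sq]
    nlinarith [sq_nonneg a, sq_abs ζ.im, abs_nonneg ζ.im]
  have hpow := re_pow_pos_of_mul_abs_im_lt (n := k) hre (by
    rw [re_sub_sq_add_sq, im_sub_sq_add_sq, abs_mul, abs_mul, abs_two]
    nlinarith [sq_nonneg (|a| - α / 4), sq_abs a, abs_nonneg a, sq_abs ζ.im, abs_nonneg ζ.im,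
      mul_le_mul_of_nonneg_right h (abs_nonneg a)])
  rw [sTerm, inv_re]
  exact div_pos hpow (normSq_pos.mpr fun h0 => hpow.ne' (by rw [h0, zero_re]))

lemma re_complexS_pos {α : ℝ} (hα : 0 < α) {k : ℕ} (hk : k ≠ 0) {ζ : ℂ}
    (h : 4 * k * |ζ.im| ≤ α) : 0 < (complexS α k ζ).re := by
  have hk1 : (1 : ℝ) ≤ k := by exact_mod_cast Nat.one_le_iff_ne_zero.mpr hk
  have hsum := summable_sTerm hα hk (ζ := ζ) (by nlinarith [abs_nonneg ζ.im])
  rw [complexS, re_tsum hsum]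
  exact (hasSum_re hsum.hasSum).summable.tsum_pos (fun j => (re_sTerm_pos hα hk j h).le) 0
    (re_sTerm_pos hα hk 0 h)

/-- The 2π-periodic function Φ̂ₖ extends analytically to a strip
around the real axis. -/
theorem stmt_1 (α : ℝ) (hα : 0 < α) (k : ℕ) (hk : 1 ≤ k) :
    ∃ ε > (0 : ℝ), ∃ G : ℂ → ℂ,
      AnalyticOnNhd ℂ G {ζ : ℂ | |ζ.im| < ε} ∧
      ∀ ξ : ℝ, G ξ = (Phihat α k ξ : ℂ) := by
  have hk0 : k ≠ 0 := Nat.one_le_iff_ne_zero.mp hk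
  have hk4 : (0 : ℝ) < 4 * k := by positivity
  refine ⟨α / (4 * k), by positivity,
    fun ζ => (-1) ^ k * ((√(2 * π) : ℝ) : ℂ)⁻¹ / complexS α k ζ, fun ζ hζ => ?_, fun ξ => ?_⟩
  · have hζ : 4 * k * |ζ.im| ≤ α := by
      linarith [(lt_div_iff₀ hk4).mp hζ]
    have hstrip : |ζ.im| < α / 2 := by
      have : (1 : ℝ) ≤ k := by exact_mod_cast hk
      nlinarith [abs_nonneg ζ.im]
    exact analyticAt_const.div (analyticOnNhd_complexS hα hk0 ζ hstrip)
      fun h0 => by simpa [h0] using re_complexS_pos hα hk0 hζ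
  · simp [complexS_ofReal, Phihat, div_eq_mul_inv]
end

section
/- The fundamental function satisfies the cardinal interpolation conditions: L_k(j) = 1 if j = 0 and L_k(j) = 0 for every nonzero integer j. -/
open MeasureTheory Filter
open scoped ENNReal

/-!
Periodizing the Fourier integral over the period `2π` turns `L_k(j)` into
`(2π)^{-1/2} ∫_0^{2π} (∑_n L̂_k(ξ + 2πn)) e^{ijξ} dξ`, since `e^{ijξ}` is `2π`-periodic for integer
`j`. As `S` is `2π`-periodic and is itself the periodization of `(ξ² + α²)^{-k}`, the periodization
of `L̂_k` is the constant `(2π)^{-1/2}`. What remains is `(2π)^{-1} ∫_0^{2π} e^{ijξ} dξ = δ_{0j}`.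
The same constant periodization bounds `∫ L̂_k`, which gives the integrability of `L̂_k`.
-/

open Set Function Real

section Periodization

variable {T : ℝ}

theorem tsum_zmultiples_eq_tsum_int {M : Type*} [AddCommMonoid M] [TopologicalSpace M]
    (hT : T ≠ 0) (g : AddSubgroup.zmultiples T → M) :
    ∑' t, g t = ∑' n : ℤ, g ⟨n • T, AddSubgroup.zsmul_mem_zmultiples T n⟩ := by
  have hbij : Bijective fun n : ℤ =>
      (⟨n • T, AddSubgroup.zsmul_mem_zmultiples T n⟩ : AddSubgroup.zmultiples T) := by
    refine ⟨fun m n h => smul_left_injective ℤ hT (congrArg Subtype.val h), ?_⟩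
    rintro ⟨_, n, rfl⟩
    exact ⟨n, rfl⟩
  exact ((Equiv.ofBijective _ hbij).tsum_eq g).symm

theorem lintegral_eq_tsum_setLIntegral_Ioc_add_zsmul (hT : 0 < T) (f : ℝ → ℝ≥0∞) :
    ∫⁻ x, f x = ∑' n : ℤ, ∫⁻ x in Ioc 0 T, f (x + n • T) := by
  refine ((isAddFundamentalDomain_Ioc hT 0).lintegral_eq_tsum'' f).trans ?_
  rw [tsum_zmultiples_eq_tsum_int hT.ne', zero_add]
  refine tsum_congr fun n => lintegral_congr fun x => ?_
  rw [add_comm]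
  rfl

theorem lintegral_eq_setLIntegral_Ioc_tsum_add_zsmul (hT : 0 < T) {f : ℝ → ℝ≥0∞}
    (hf : Measurable f) : ∫⁻ x, f x = ∫⁻ x in Ioc 0 T, ∑' n : ℤ, f (x + n • T) := by
  rw [lintegral_eq_tsum_setLIntegral_Ioc_add_zsmul hT]
  exact (lintegral_tsum fun n => (hf.comp (measurable_add_const _)).aemeasurable).symm

theorem integral_eq_setIntegral_Ioc_tsum_add_zsmul {E : Type*} [NormedAddCommGroup E]
    [NormedSpace ℝ E] (hT : 0 < T) {f : ℝ → E} (hf : Integrable f) :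
    ∫ x, f x = ∫ x in Ioc 0 T, ∑' n : ℤ, f (x + n • T) := by
  refine ((isAddFundamentalDomain_Ioc hT 0).integral_eq_tsum'' f hf).trans ?_
  rw [tsum_zmultiples_eq_tsum_int hT.ne', zero_add, integral_tsum]
  · refine tsum_congr fun n => integral_congr_ae (ae_of_all _ fun x => ?_)
    show f (n • T + x) = f (x + n • T)
    rw [add_comm]
  · exact fun n => (hf.comp_add_right _).aestronglyMeasurable.restrict
  · exact lintegral_eq_tsum_setLIntegral_Ioc_add_zsmul hT (‖f ·‖ₑ) ▸ hf.2.ne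

theorem integrable_of_hasSum_add_zsmul (hT : 0 < T) {f : ℝ → ℝ} (hf : Measurable f)
    (hf0 : ∀ x, 0 ≤ f x) {c : ℝ} (hsum : ∀ x, HasSum (fun n : ℤ => f (x + n • T)) c) :
    Integrable f := by
  have hper (x : ℝ) : ∑' n : ℤ, ‖f (x + n • T)‖ₑ = ENNReal.ofReal c := by
    simp_rw [Real.enorm_of_nonneg (hf0 _)]
    rw [← ENNReal.ofReal_tsum_of_nonneg (fun n => hf0 _) (hsum x).summable, (hsum x).tsum_eq]
  refine ⟨hf.aestronglyMeasurable, ?_⟩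
  rw [HasFiniteIntegral, lintegral_eq_setLIntegral_Ioc_tsum_add_zsmul hT hf.enorm]
  simp_rw [hper, setLIntegral_const]
  exact ENNReal.mul_lt_top ENNReal.ofReal_lt_top measure_Ioc_lt_top

theorem integral_mul_eq_of_hasSum_add_zsmul (hT : 0 < T) {f g : ℝ → ℂ} (hf : Integrable f)
    (hg : Continuous g) (hgT : Periodic g T) {c : ℂ}
    (hsum : ∀ x, HasSum (fun n : ℤ => f (x + n • T)) c) :
    ∫ x, f x * g x = c * ∫ x in Ioc 0 T, g x := by
  obtain ⟨C, hC⟩ := (hgT.isBounded_of_continuous hT.ne' hg).exists_norm_le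
  have hfg : Integrable fun x => f x * g x :=
    hf.mul_bdd hg.aestronglyMeasurable (ae_of_all _ fun x => hC _ (mem_range_self x))
  rw [integral_eq_setIntegral_Ioc_tsum_add_zsmul hT hfg, ← integral_const_mul]
  congr 1
  ext x
  calc ∑' n : ℤ, f (x + n • T) * g (x + n • T) = ∑' n : ℤ, f (x + n • T) * g x :=
        tsum_congr fun n => by rw [hgT.zsmul n x]
    _ = c * g x := by rw [tsum_mul_right, (hsum x).tsum_eq]

end Periodization

section FundamentalFunction

variable (α : ℝ) {k : ℕ}

theorem summable_S_summand (hk : k ≠ 0) (ξ : ℝ) :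
    Summable fun j : ℤ => (((ξ - 2 * π * j) ^ 2 + α ^ 2) ^ k)⁻¹ := by
  refine Summable.of_norm_bounded_eventually (g := fun j : ℤ => ((j : ℝ) ^ 2)⁻¹)
    (by simpa only [one_div] using Real.summable_one_div_int_pow.mpr one_lt_two) ?_
  have hlarge : ∀ᶠ j : ℤ in cofinite, max |ξ| 1 ≤ ‖(j : ℝ)‖ :=
    (tendsto_norm_cocompact_atTop.comp Int.tendsto_coe_cofinite).eventually_ge_atTop _
  filter_upwards [hlarge] with j hj
  rw [Real.norm_eq_abs, max_le_iff] at hj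
  -- once `|j| ≥ |ξ|`, the shift by `2πj` dominates `ξ` since `2π ≥ 2`
  have hjξ : |(j : ℝ)| ≤ |ξ - 2 * π * j| := by
    have := abs_sub_abs_le_abs_sub (2 * π * j) ξ
    rw [abs_sub_comm, abs_mul, abs_of_pos two_pi_pos] at this
    nlinarith [pi_gt_three, abs_nonneg (j : ℝ)]
  have hb : (j : ℝ) ^ 2 ≤ (ξ - 2 * π * j) ^ 2 + α ^ 2 := by
    nlinarith [sq_le_sq.mpr hjξ, sq_nonneg α]
  have hj1 : 1 ≤ (j : ℝ) ^ 2 := one_le_sq_iff_one_le_abs _ |>.mpr hj.2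
  rw [norm_inv, norm_pow, Real.norm_of_nonneg (by positivity)]
  exact inv_anti₀ (by positivity) (hb.trans (le_self_pow₀ (hj1.trans hb) hk))

theorem S_pos (hk : k ≠ 0) (ξ : ℝ) : 0 < S α k ξ := by
  obtain ⟨j, hj⟩ : ∃ j : ℤ, ξ - 2 * π * j ≠ 0 := by
    by_cases hξ : ξ = 0
    · exact ⟨1, by simp [hξ, pi_ne_zero]⟩
    · exact ⟨0, by simpa using hξ⟩
  exact (summable_S_summand α hk ξ).tsum_pos (fun _ => by positivity) j
    (inv_pos.mpr (pow_pos (add_pos_of_pos_of_nonneg (sq_pos_of_ne_zero hj) (sq_nonneg α)) k))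

theorem S_periodic : Periodic (S α k) (2 * π) := by
  intro ξ
  refine Eq.trans ?_ ((Equiv.subRight (1 : ℤ)).tsum_eq _)
  refine tsum_congr fun j => ?_
  rw [Equiv.subRight_apply]
  push_cast
  ring_nf

theorem hasSum_S_summand_add_zsmul (hk : k ≠ 0) (ξ : ℝ) :
    HasSum (fun n : ℤ => (((ξ + n • (2 * π)) ^ 2 + α ^ 2) ^ k)⁻¹) (S α k ξ) := by
  rw [← (Equiv.neg ℤ).hasSum_iff, S]
  convert (summable_S_summand α hk ξ).hasSum using 3 with n
  simp only [comp_apply, Equiv.neg_apply, zsmul_eq_mul, Int.cast_neg]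
  ring

theorem hasSum_Lhat_add_zsmul (hk : k ≠ 0) (ξ : ℝ) :
    HasSum (fun n : ℤ => Lhat α k (ξ + n • (2 * π))) (√(2 * π))⁻¹ := by
  have h := ((hasSum_S_summand_add_zsmul α hk ξ).mul_left (√(2 * π))⁻¹).div_const (S α k ξ)
  rw [mul_div_assoc, div_self (S_pos α hk ξ).ne', mul_one] at h
  refine h.congr_fun fun n => ?_
  rw [Lhat, (S_periodic α).zsmul n ξ]

theorem Lhat_nonneg (ξ : ℝ) : 0 ≤ Lhat α k ξ := by
  have : 0 ≤ S α k ξ := tsum_nonneg fun _ => by positivity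
  unfold Lhat
  positivity

theorem measurable_Lhat : Measurable (Lhat α k) := by
  have : Measurable (S α k) := Measurable.tsum fun j => by fun_prop
  unfold Lhat
  fun_prop

theorem integrable_Lhat (hk : k ≠ 0) : Integrable (Lhat α k) :=
  integrable_of_hasSum_add_zsmul two_pi_pos (measurable_Lhat α) (Lhat_nonneg α)
    (hasSum_Lhat_add_zsmul α hk)

end FundamentalFunction

section Exponential

open Complex

theorem periodic_exp_I_mul_intCast (j : ℤ) :
    Periodic (fun ξ : ℝ => exp (I * ((j : ℝ) : ℂ) * ξ)) (2 * π) := by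
  intro ξ
  have : I * ((j : ℝ) : ℂ) * ((ξ + 2 * π : ℝ) : ℂ) = I * (j : ℝ) * ξ + j * (2 * π * I) := by
    push_cast
    ring
  simp only [this, Complex.exp_add, exp_int_mul_two_pi_mul_I, mul_one]

theorem setIntegral_Ioc_exp_I_mul_intCast (j : ℤ) :
    ∫ ξ in Ioc 0 (2 * π), exp (I * ((j : ℝ) : ℂ) * ξ) = if j = 0 then ((2 * π : ℝ) : ℂ) else 0 := by
  split_ifs with hj
  · simp [hj, two_pi_pos.le]
  · have hc : I * ((j : ℝ) : ℂ) ≠ 0 := by simp [hj, I_ne_zero]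
    rw [← intervalIntegral.integral_of_le two_pi_pos.le, integral_exp_mul_complex hc]
    have := periodic_exp_I_mul_intCast j 0
    simp_all

end Exponential

theorem Lk_intCast {α : ℝ} {k : ℕ} (hk : k ≠ 0) (j : ℤ) : Lk α k j = if j = 0 then 1 else 0 := by
  have hsum (ξ : ℝ) : HasSum (fun n : ℤ => (Lhat α k (ξ + n • (2 * π)) : ℂ)) ((√(2 * π))⁻¹ : ℝ) :=
    Complex.hasSum_ofReal.mpr (hasSum_Lhat_add_zsmul α hk ξ)
  rw [Lk, integral_mul_eq_of_hasSum_add_zsmul (f := fun ξ => (Lhat α k ξ : ℂ)) two_pi_pos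
    (integrable_Lhat α hk).ofReal (by fun_prop) (periodic_exp_I_mul_intCast j) hsum,
    setIntegral_Ioc_exp_I_mul_intCast]
  split_ifs
  · norm_cast
    field_simp
    exact (sq_sqrt two_pi_pos.le).symm
  · simp

theorem stmt_4_general (α : ℝ) (k : ℕ) (hk : 1 ≤ k) :
    Lk α k 0 = 1 ∧ ∀ j : ℤ, j ≠ 0 → Lk α k (j : ℝ) = 0 := by
  have hk0 : k ≠ 0 := Nat.one_le_iff_ne_zero.mp hk
  exact ⟨by simpa using Lk_intCast hk0 0, fun j hj => by simpa [hj] using Lk_intCast hk0 j⟩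

/-- The fundamental function satisfies the cardinal interpolation
conditions `Lₖ(j) = δ_{0,j}` for `j ∈ ℤ`. -/
theorem stmt_4 (α : ℝ) (hα : 0 < α) (k : ℕ) (hk : 1 ≤ k) :
    Lk α k 0 = 1 ∧ ∀ j : ℤ, j ≠ 0 → Lk α k (j : ℝ) = 0 :=
  stmt_4_general α k hk
end

section
/- Let b = {b_j : j ∈ ℤ} be a sequence of polynomial growth, i.e. there exist C > 0 and β > 0 with |b_j| ≤ C(1 + |j|)^β for all j. Then the series f_b(x) = Σ_{j∈ℤ} b_j L_k(x − j) converges absolutely for every x ∈ ℝ, and the convergence is uniform on every compact subset of ℝ. -/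
open MeasureTheory Filter
open scoped ENNReal

/-!
The Fourier transform `L̂_k = (2π)^{-1/2} φ / S` with `φ(ξ) = (ξ² + α²)^{-k}` is smooth and all
of its derivatives are `O((1 + ξ²)⁻¹)`: the derivatives of `φ` are rational functions of that
size, and `1 / S` is smooth (the differentiated periodization series still converge locally
uniformly) and `2π`-periodic, hence has bounded derivatives. Integrating by parts `n` times bounds
`|x|ⁿ |L_k(x)|` for every `n`, so `L_k` decays faster than any power. With
`1 + |j| ≤ (1 + |x|)(1 + |x - j|)` the terms `b_j L_k(x - j)` are then dominated, uniformly for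
`|x| ≤ R`, by a multiple of `(1 + j²)⁻¹`, and the Weierstrass M-test concludes.
-/

namespace FundamentalFunction

open Polynomial
open scoped ContDiff FourierTransform

theorem one_add_sq_le_two_mul (x y : ℝ) : 1 + y ^ 2 ≤ 2 * (1 + x ^ 2) * (1 + (x - y) ^ 2) := by
  nlinarith [sq_nonneg (2 * x - y), mul_nonneg (sq_nonneg x) (sq_nonneg (x - y))]

theorem inv_one_add_sq_sub_le (x y : ℝ) :
    (1 + (x - y) ^ 2)⁻¹ ≤ 2 * (1 + x ^ 2) * (1 + y ^ 2)⁻¹ := by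
  rw [← div_eq_mul_inv, le_div_iff₀ (by positivity), inv_mul_le_iff₀ (by positivity)]
  linarith [one_add_sq_le_two_mul x y]

theorem summable_inv_one_add_mul_int_sq {T : ℝ} (hT : T ≠ 0) :
    Summable fun j : ℤ => (1 + (T * j) ^ 2)⁻¹ := by
  refine Summable.of_norm_bounded_eventually
    ((Real.summable_one_div_int_pow.mpr one_lt_two).mul_left (T ^ 2)⁻¹) ?_
  filter_upwards [eventually_cofinite_ne 0] with j hj
  have hj' : (j : ℝ) ≠ 0 := Int.cast_ne_zero.mpr hj
  rw [Real.norm_eq_abs, abs_of_pos (by positivity), one_div, ← mul_inv, ← mul_pow]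
  gcongr
  linarith

theorem summable_inv_one_add_int_sq : Summable fun j : ℤ => (1 + (j : ℝ) ^ 2)⁻¹ := by
  simpa using summable_inv_one_add_mul_int_sq one_ne_zero

theorem abs_pow_le_one_add_sq_pow {i m : ℕ} (him : i ≤ 2 * m) (u : ℝ) :
    |u| ^ i ≤ (1 + u ^ 2) ^ m := by
  calc |u| ^ i ≤ max 1 |u| ^ i := by gcongr; exact le_max_right _ _
    _ ≤ max 1 |u| ^ (2 * m) := pow_le_pow_right₀ (le_max_left _ _) him
    _ = (max 1 |u| ^ 2) ^ m := pow_mul _ _ _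
    _ ≤ (1 + u ^ 2) ^ m := by
      gcongr
      rcases le_total 1 |u| with h | h
      · rw [max_eq_right h, sq_abs]; linarith
      · rw [max_eq_left h]; nlinarith

theorem exists_abs_eval_le_of_natDegree_le {P : ℝ[X]} {m : ℕ} (hP : P.natDegree ≤ 2 * m) :
    ∃ c, ∀ u, |P.eval u| ≤ c * (1 + u ^ 2) ^ m := by
  refine ⟨∑ i ∈ Finset.range (2 * m + 1), |P.coeff i|, fun u => ?_⟩
  rw [eval_eq_sum_range' (Nat.lt_succ_of_le hP), Finset.sum_mul]
  refine (Finset.abs_sum_le_sum_abs _ _).trans (Finset.sum_le_sum fun i hi => ?_)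
  rw [abs_mul, abs_pow]
  gcongr
  exact abs_pow_le_one_add_sq_pow (Finset.mem_range_succ_iff.mp hi) u

def HasDecayingDerivs {E : Type*} [NormedAddCommGroup E] [NormedSpace ℝ E] (f : ℝ → E) : Prop :=
  ∀ m : ℕ, ∃ c, ∀ u, ‖iteratedDeriv m f u‖ ≤ c * (1 + u ^ 2)⁻¹

noncomputable def invMultiquadric (α : ℝ) (k : ℕ) (u : ℝ) : ℝ := ((u ^ 2 + α ^ 2) ^ k)⁻¹

theorem contDiff_invMultiquadric {α : ℝ} (hα : α ≠ 0) (k : ℕ) :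
    ContDiff ℝ ∞ (invMultiquadric α k) :=
  (((contDiff_id.pow 2).add contDiff_const).pow k).inv fun u => by positivity

theorem hasDerivAt_eval_div_pow {α : ℝ} (hα : α ≠ 0) (P : ℝ[X]) (n : ℕ) (u : ℝ) :
    HasDerivAt (fun u => P.eval u / (u ^ 2 + α ^ 2) ^ n)
      ((derivative P * (X ^ 2 + C (α ^ 2)) - C (2 * n : ℝ) * X * P).eval u /
        (u ^ 2 + α ^ 2) ^ (n + 1)) u := by
  have hq : HasDerivAt (fun u => u ^ 2 + α ^ 2) (2 * u) u := by
    simpa using (hasDerivAt_pow 2 u).add_const (α ^ 2)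
  have hpos : 0 < u ^ 2 + α ^ 2 := by positivity
  refine ((P.hasDerivAt u).fun_div (hq.fun_pow n) (by positivity)).congr_deriv ?_
  rcases n with _ | n <;>
    simp only [eval_sub, eval_mul, eval_add, eval_pow, eval_X, eval_C, Nat.add_sub_cancel] <;>
    field_simp <;> push_cast <;> ring

theorem natDegree_derivative_mul_sub_le {P : ℝ[X]} {m : ℕ} (hP : P.natDegree ≤ 2 * m) (a b : ℝ) :
    (derivative P * (X ^ 2 + C a) - C b * X * P).natDegree ≤ 2 * (m + 1) := by
  have h1 : (derivative P * (X ^ 2 + C a)).natDegree ≤ 2 * m + 2 :=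
    natDegree_mul_le.trans (add_le_add ((natDegree_derivative_le P).trans (by omega))
      (natDegree_X_pow_add_C (n := 2) (r := a)).le)
  have h2 : (C b * X * P).natDegree ≤ 2 * m + 2 :=
    natDegree_mul_le.trans (by
      have := (natDegree_C_mul_le b X).trans natDegree_X_le
      omega)
  exact (natDegree_sub_le _ _).trans (max_le h1 h2)

/-- The true degree is `m`; the cruder `2 * m` keeps the induction free of the case `P' = 0`. -/
theorem exists_iteratedDeriv_invMultiquadric_eq {α : ℝ} (hα : α ≠ 0) (k m : ℕ) :
    ∃ P : ℝ[X], P.natDegree ≤ 2 * m ∧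
      iteratedDeriv m (invMultiquadric α k) = fun u => P.eval u / (u ^ 2 + α ^ 2) ^ (k + m) := by
  induction m with
  | zero => exact ⟨1, by simp, by ext u; simp [invMultiquadric]⟩
  | succ m ih =>
    obtain ⟨P, hP, hPeq⟩ := ih
    refine ⟨_, natDegree_derivative_mul_sub_le hP (α ^ 2) (2 * (k + m : ℕ)), ?_⟩
    ext u
    rw [iteratedDeriv_succ, hPeq, (hasDerivAt_eval_div_pow hα P (k + m) u).deriv]
    rfl

theorem hasDecayingDerivs_invMultiquadric {α : ℝ} (hα : α ≠ 0) {k : ℕ} (hk : 1 ≤ k) :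
    HasDecayingDerivs (invMultiquadric α k) := by
  intro m
  obtain ⟨P, hP, hPeq⟩ := exists_iteratedDeriv_invMultiquadric_eq hα k m
  obtain ⟨c, hc⟩ := exists_abs_eval_le_of_natDegree_le hP
  set ε := min 1 (α ^ 2)
  have hε : 0 < ε := lt_min one_pos (by positivity)
  refine ⟨c / ε ^ (k + m), fun u => ?_⟩
  have hc0 : 0 ≤ c := nonneg_of_mul_nonneg_left ((abs_nonneg _).trans (hc u)) (by positivity)
  have hden : ε ^ (k + m) * (1 + u ^ 2) ^ (k + m) ≤ (u ^ 2 + α ^ 2) ^ (k + m) := by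
    rw [← mul_pow]
    gcongr
    nlinarith [min_le_left 1 (α ^ 2), min_le_right 1 (α ^ 2), sq_nonneg u]
  have hw : 1 ≤ 1 + u ^ 2 := by nlinarith
  rw [hPeq, Real.norm_eq_abs, abs_div, abs_of_pos (a := (u ^ 2 + α ^ 2) ^ (k + m)) (by positivity)]
  calc |P.eval u| / (u ^ 2 + α ^ 2) ^ (k + m)
      ≤ c * (1 + u ^ 2) ^ m / (ε ^ (k + m) * (1 + u ^ 2) ^ (k + m)) := by
        gcongr
        exact hc u
    _ = c / ε ^ (k + m) * ((1 + u ^ 2) ^ k)⁻¹ := by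
        rw [pow_add]; field_simp; ring
    _ ≤ c / ε ^ (k + m) * (1 + u ^ 2)⁻¹ := by
        gcongr
        exact le_self_pow₀ hw (by omega)

theorem hasDerivAt_iteratedDeriv {E : Type*} [NormedAddCommGroup E] [NormedSpace ℝ E]
    {f : ℝ → E} (hf : ContDiff ℝ ∞ f) (m : ℕ) (x : ℝ) :
    HasDerivAt (iteratedDeriv m f) (iteratedDeriv (m + 1) f x) x := by
  rw [iteratedDeriv_succ]
  exact (hf.differentiable_iteratedDeriv m
    (by exact_mod_cast ENat.natCast_lt_top m)).differentiableAt.hasDerivAt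

section Periodization

variable {E : Type*} [NormedAddCommGroup E] {T : ℝ}

noncomputable def periodize (T : ℝ) (f : ℝ → E) (x : ℝ) : E := ∑' j : ℤ, f (x - T * j)

theorem periodic_periodize (T : ℝ) (f : ℝ → E) : Function.Periodic (periodize T f) T := by
  intro x
  rw [periodize, periodize, ← (Equiv.addRight (1 : ℤ)).tsum_eq]
  congr 1 with j
  rw [Equiv.coe_addRight]
  push_cast
  ring_nf

theorem norm_comp_sub_mul_le {f : ℝ → E} {c : ℝ} (hf : ∀ u, ‖f u‖ ≤ c * (1 + u ^ 2)⁻¹) (T : ℝ)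
    {x R : ℝ} (hx : |x| ≤ R) (j : ℤ) :
    ‖f (x - T * j)‖ ≤ 2 * c * (1 + R ^ 2) * (1 + (T * j) ^ 2)⁻¹ := by
  have hc : 0 ≤ c := nonneg_of_mul_nonneg_left ((norm_nonneg _).trans (hf 0)) (by positivity)
  have hxR : x ^ 2 ≤ R ^ 2 := sq_le_sq' (abs_le.mp hx).1 (abs_le.mp hx).2
  calc ‖f (x - T * j)‖ ≤ c * (1 + (x - T * j) ^ 2)⁻¹ := hf _
    _ ≤ c * (2 * (1 + x ^ 2) * (1 + (T * j) ^ 2)⁻¹) := by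
      gcongr; exact inv_one_add_sq_sub_le x (T * j)
    _ ≤ c * (2 * (1 + R ^ 2) * (1 + (T * j) ^ 2)⁻¹) := by gcongr
    _ = 2 * c * (1 + R ^ 2) * (1 + (T * j) ^ 2)⁻¹ := by ring

variable [CompleteSpace E]

theorem summable_comp_sub_mul (hT : T ≠ 0) {f : ℝ → E}
    (hf : ∃ c, ∀ u, ‖f u‖ ≤ c * (1 + u ^ 2)⁻¹) (x : ℝ) : Summable fun j : ℤ => f (x - T * j) :=
  let ⟨_, hc⟩ := hf
  .of_norm_bounded ((summable_inv_one_add_mul_int_sq hT).mul_left _)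
    (norm_comp_sub_mul_le hc T le_rfl)

variable [NormedSpace ℝ E]

theorem hasDerivAt_periodize (hT : T ≠ 0) {f f' : ℝ → E} (hf : ∀ u, HasDerivAt f (f' u) u)
    (hf₀ : ∃ c, ∀ u, ‖f u‖ ≤ c * (1 + u ^ 2)⁻¹) (hf₁ : ∃ c, ∀ u, ‖f' u‖ ≤ c * (1 + u ^ 2)⁻¹)
    (x : ℝ) : HasDerivAt (periodize T f) (periodize T f' x) x := by
  obtain ⟨c, hc⟩ := hf₁
  have hx : x ∈ Metric.ball (0 : ℝ) (|x| + 1) := by simp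
  unfold periodize
  exact hasDerivAt_tsum_of_isPreconnected ((summable_inv_one_add_mul_int_sq hT).mul_left _)
    Metric.isOpen_ball (convex_ball _ _).isPreconnected
    (fun j y _ => (hf (y - T * j)).comp_sub_const y (T * j))
    (fun j y hy => norm_comp_sub_mul_le hc T (le_of_lt (by simpa using hy)) j)
    hx (summable_comp_sub_mul hT hf₀ x) hx

variable {f : ℝ → E}

theorem hasDerivAt_periodize_iteratedDeriv (hT : T ≠ 0) (hf : ContDiff ℝ ∞ f)
    (hdecay : HasDecayingDerivs f) (m : ℕ) (x : ℝ) :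
    HasDerivAt (periodize T (iteratedDeriv m f)) (periodize T (iteratedDeriv (m + 1) f) x) x :=
  hasDerivAt_periodize hT (hasDerivAt_iteratedDeriv hf m) (hdecay m) (hdecay (m + 1)) x

theorem iteratedDeriv_periodize (hT : T ≠ 0) (hf : ContDiff ℝ ∞ f)
    (hdecay : HasDecayingDerivs f) (m : ℕ) :
    iteratedDeriv m (periodize T f) = periodize T (iteratedDeriv m f) := by
  induction m with
  | zero => simp
  | succ m ih =>
    ext x
    rw [iteratedDeriv_succ, ih]
    exact (hasDerivAt_periodize_iteratedDeriv hT hf hdecay m x).deriv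

theorem contDiff_periodize (hT : T ≠ 0) (hf : ContDiff ℝ ∞ f)
    (hdecay : HasDecayingDerivs f) :
    ContDiff ℝ ∞ (periodize T f) :=
  contDiff_of_differentiable_iteratedDeriv fun m _ => by
    rw [iteratedDeriv_periodize hT hf hdecay m]
    exact fun x => (hasDerivAt_periodize_iteratedDeriv hT hf hdecay m x).differentiableAt

end Periodization

theorem _root_.Function.Periodic.iteratedDeriv {E : Type*} [NormedAddCommGroup E]
    [NormedSpace ℝ E] {f : ℝ → E} {T : ℝ} (h : Function.Periodic f T) (m : ℕ) :
    Function.Periodic (iteratedDeriv m f) T := fun x => by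
  simpa [funext h] using (congrFun (iteratedDeriv_comp_add_const (f := f) (n := m) (s := T)) x).symm

theorem exists_norm_iteratedDeriv_le_of_periodic {E : Type*} [NormedAddCommGroup E]
    [NormedSpace ℝ E] {f : ℝ → E} {T : ℝ} (hT : T ≠ 0) (hf : ContDiff ℝ ∞ f)
    (hper : Function.Periodic f T) (m : ℕ) : ∃ B, ∀ x, ‖iteratedDeriv m f x‖ ≤ B := by
  obtain ⟨B, hB⟩ := isBounded_iff_forall_norm_le.mp <|
    (hper.iteratedDeriv m).isBounded_of_continuous hT
      (hf.continuous_iteratedDeriv m (by exact_mod_cast le_top))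
  exact ⟨B, fun x => hB _ ⟨x, rfl⟩⟩

theorem HasDecayingDerivs.mul {f h : ℝ → ℝ} (hfd : HasDecayingDerivs f) (hf : ContDiff ℝ ∞ f)
    (hh : ContDiff ℝ ∞ h) (hhb : ∀ m, ∃ B, ∀ u, ‖iteratedDeriv m h u‖ ≤ B) :
    HasDecayingDerivs (f * h) := by
  choose c hc using hfd
  choose B hB using hhb
  intro n
  refine ⟨∑ i ∈ Finset.range (n + 1), n.choose i * c i * B (n - i), fun u => ?_⟩
  rw [iteratedDeriv_mul (hf.of_le (by exact_mod_cast le_top)).contDiffAt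
    (hh.of_le (by exact_mod_cast le_top)).contDiffAt, Finset.sum_mul]
  refine (norm_sum_le _ _).trans (Finset.sum_le_sum fun i _ => ?_)
  rw [norm_mul, norm_mul, Real.norm_natCast]
  calc (n.choose i : ℝ) * ‖iteratedDeriv i f u‖ * ‖iteratedDeriv (n - i) h u‖
      ≤ n.choose i * (c i * (1 + u ^ 2)⁻¹) * B (n - i) := by
        have := (norm_nonneg _).trans (hc i u)
        gcongr
        · exact hc i u
        · exact hB _ u
    _ = n.choose i * c i * B (n - i) * (1 + u ^ 2)⁻¹ := by ring

theorem integrable_of_norm_le_inv_one_add_sq {E : Type*} [NormedAddCommGroup E] {g : ℝ → E}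
    (hg : Continuous g) {c : ℝ} (h : ∀ u, ‖g u‖ ≤ c * (1 + u ^ 2)⁻¹) : Integrable g :=
  (integrable_inv_one_add_sq.const_mul c).mono' hg.aestronglyMeasurable (ae_of_all _ h)

theorem pow_abs_mul_norm_fourier_le {E : Type*} [NormedAddCommGroup E] [NormedSpace ℂ E]
    {f : ℝ → E} {n : ℕ} (hf : ContDiff ℝ n f) (hint : ∀ m ≤ n, Integrable (iteratedDeriv m f))
    (w : ℝ) : (2 * Real.pi * |w|) ^ n * ‖𝓕 f w‖ ≤ ∫ v, ‖iteratedDeriv n f v‖ := by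
  have h : ‖𝓕 (iteratedDeriv n f) w‖ ≤ ∫ v, ‖iteratedDeriv n f v‖ :=
    VectorFourier.norm_fourierIntegral_le_integral_norm _ _ _ _ _
  rw [Real.fourier_iteratedDeriv hf (fun m hm => hint m (by exact_mod_cast hm)) le_rfl] at h
  simpa [norm_smul, abs_of_pos Real.pi_pos] using h

theorem iteratedDeriv_ofReal_comp {f : ℝ → ℝ} (hf : ContDiff ℝ ∞ f) (m : ℕ) :
    iteratedDeriv m (fun x => (f x : ℂ)) = fun x => ((iteratedDeriv m f x : ℝ) : ℂ) := by
  induction m with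
  | zero => simp
  | succ m ih =>
    ext x
    rw [iteratedDeriv_succ, ih]
    exact (hasDerivAt_iteratedDeriv hf m x).ofReal_comp.deriv

theorem exists_pow_abs_mul_norm_fourier_ofReal_le {f : ℝ → ℝ} (hf : ContDiff ℝ ∞ f)
    (hdecay : HasDecayingDerivs f) (n : ℕ) :
    ∃ M, ∀ w, (2 * Real.pi * |w|) ^ n * ‖𝓕 (fun v => (f v : ℂ)) w‖ ≤ M := by
  have hfc : ContDiff ℝ ∞ (fun v => (f v : ℂ)) := Complex.ofRealCLM.contDiff.comp hf
  refine ⟨_, pow_abs_mul_norm_fourier_le (hfc.of_le (by exact_mod_cast le_top)) (fun m _ => ?_)⟩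
  obtain ⟨c, hc⟩ := hdecay m
  rw [iteratedDeriv_ofReal_comp hf]
  exact integrable_of_norm_le_inv_one_add_sq
    (Complex.continuous_ofReal.comp (hf.continuous_iteratedDeriv m (by exact_mod_cast le_top)))
    (fun u => by simpa using hc u)

theorem exists_one_add_abs_pow_mul_le {φ : ℝ → ℝ} (h : ∀ n, ∃ M, ∀ x, |x| ^ n * |φ x| ≤ M)
    (n : ℕ) : ∃ D, ∀ x, (1 + |x|) ^ n * |φ x| ≤ D := by
  obtain ⟨M₀, hM₀⟩ := h 0
  obtain ⟨M, hM⟩ := h n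
  refine ⟨2 ^ (n - 1) * (M₀ + M), fun x => ?_⟩
  calc (1 + |x|) ^ n * |φ x| ≤ 2 ^ (n - 1) * (1 ^ n + |x| ^ n) * |φ x| := by
        gcongr; exact add_pow_le zero_le_one (abs_nonneg x) n
    _ = 2 ^ (n - 1) * (|x| ^ 0 * |φ x| + |x| ^ n * |φ x|) := by ring
    _ ≤ 2 ^ (n - 1) * (M₀ + M) := by gcongr <;> simp only [hM₀, hM]

theorem abs_mul_comp_sub_le {b : ℤ → ℝ} {φ : ℝ → ℝ} {C D : ℝ} {n : ℕ}
    (hb : ∀ j : ℤ, |b j| ≤ C * (1 + |(j : ℝ)|) ^ n) (hφ : ∀ y, (1 + |y|) ^ (n + 2) * |φ y| ≤ D)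
    {x R : ℝ} (hx : |x| ≤ R) (j : ℤ) :
    |b j * φ (x - j)| ≤ C * D * (1 + R) ^ (n + 2) * (1 + (j : ℝ) ^ 2)⁻¹ := by
  have hC : 0 ≤ C := by simpa using (abs_nonneg _).trans (hb 0)
  have hR : 0 ≤ R := (abs_nonneg x).trans hx
  have hj : 1 + |(j : ℝ)| ≤ (1 + R) * (1 + |x - j|) := by
    have := abs_sub_abs_le_abs_sub (j : ℝ) x
    rw [abs_sub_comm] at this
    nlinarith [mul_nonneg hR (abs_nonneg (x - j))]
  rw [le_mul_inv_iff₀ (by positivity), abs_mul]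
  calc |b j| * |φ (x - j)| * (1 + (j : ℝ) ^ 2)
      ≤ C * (1 + |(j : ℝ)|) ^ n * |φ (x - j)| * (1 + |(j : ℝ)|) ^ 2 := by
        gcongr
        · exact hb j
        · nlinarith [sq_abs (j : ℝ), abs_nonneg (j : ℝ)]
    _ = C * (1 + |(j : ℝ)|) ^ (n + 2) * |φ (x - j)| := by ring
    _ ≤ C * ((1 + R) * (1 + |x - j|)) ^ (n + 2) * |φ (x - j)| := by gcongr
    _ = C * (1 + R) ^ (n + 2) * ((1 + |x - j|) ^ (n + 2) * |φ (x - j)|) := by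
        rw [mul_pow]; ring
    _ ≤ C * (1 + R) ^ (n + 2) * D := by gcongr; exact hφ _
    _ = C * D * (1 + R) ^ (n + 2) := by ring

theorem summable_and_tendstoUniformlyOn_of_decay {b : ℤ → ℝ} {φ : ℝ → ℝ} {C D : ℝ} {n : ℕ}
    (hb : ∀ j : ℤ, |b j| ≤ C * (1 + |(j : ℝ)|) ^ n) (hφ : ∀ y, (1 + |y|) ^ (n + 2) * |φ y| ≤ D) :
    (∀ x : ℝ, Summable fun j : ℤ => |b j * φ (x - j)|) ∧
    ∀ K : Set ℝ, IsCompact K →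
      TendstoUniformlyOn (fun (s : Finset ℤ) x => ∑ j ∈ s, b j * φ (x - j))
        (fun x => ∑' j : ℤ, b j * φ (x - j)) atTop K := by
  refine ⟨fun x => ?_, fun K hK => ?_⟩
  · exact .of_nonneg_of_le (fun _ => abs_nonneg _) (abs_mul_comp_sub_le hb hφ le_rfl)
      (summable_inv_one_add_int_sq.mul_left _)
  · obtain ⟨R, hR⟩ := hK.isBounded.exists_norm_le
    exact tendstoUniformlyOn_tsum (summable_inv_one_add_int_sq.mul_left _)
      fun j x hx => abs_mul_comp_sub_le hb hφ (hR x hx) j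

theorem S_eq_periodize (α : ℝ) (k : ℕ) :
    S α k = periodize (2 * Real.pi) (invMultiquadric α k) := rfl

theorem S_pos {α : ℝ} (hα : α ≠ 0) {k : ℕ} (hk : 1 ≤ k) (ξ : ℝ) : 0 < S α k ξ := by
  obtain ⟨c, hc⟩ := hasDecayingDerivs_invMultiquadric hα hk 0
  simp only [iteratedDeriv_zero] at hc
  exact (summable_comp_sub_mul Real.two_pi_pos.ne' ⟨c, hc⟩ ξ).tsum_pos
    (fun j => by unfold invMultiquadric; positivity) 0 (by unfold invMultiquadric; positivity)

theorem contDiff_inv_S {α : ℝ} (hα : α ≠ 0) {k : ℕ} (hk : 1 ≤ k) :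
    ContDiff ℝ ∞ fun ξ => (S α k ξ)⁻¹ :=
  (contDiff_periodize Real.two_pi_pos.ne' (contDiff_invMultiquadric hα k)
    (hasDecayingDerivs_invMultiquadric hα hk)).inv fun ξ => (S_pos hα hk ξ).ne'

theorem Lhat_eq_mul (α : ℝ) (k : ℕ) :
    Lhat α k = invMultiquadric α k * fun ξ => (Real.sqrt (2 * Real.pi))⁻¹ * (S α k ξ)⁻¹ := by
  ext ξ
  simp only [Lhat, invMultiquadric, Pi.mul_apply, div_eq_mul_inv]
  ring

theorem contDiff_Lhat {α : ℝ} (hα : α ≠ 0) {k : ℕ} (hk : 1 ≤ k) : ContDiff ℝ ∞ (Lhat α k) := by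
  rw [Lhat_eq_mul]
  exact (contDiff_invMultiquadric hα k).mul (contDiff_const.mul (contDiff_inv_S hα hk))

theorem hasDecayingDerivs_Lhat {α : ℝ} (hα : α ≠ 0) {k : ℕ} (hk : 1 ≤ k) :
    HasDecayingDerivs (Lhat α k) := by
  have hper : Function.Periodic (fun ξ => (Real.sqrt (2 * Real.pi))⁻¹ * (S α k ξ)⁻¹)
      (2 * Real.pi) := fun ξ => by simp only [S_eq_periodize, periodic_periodize _ _ ξ]
  rw [Lhat_eq_mul]
  exact (hasDecayingDerivs_invMultiquadric hα hk).mul (contDiff_invMultiquadric hα k)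
    (contDiff_const.mul (contDiff_inv_S hα hk))
    (exists_norm_iteratedDeriv_le_of_periodic Real.two_pi_pos.ne'
      (contDiff_const.mul (contDiff_inv_S hα hk)) hper)

/-- Mathlib's `𝓕` uses the kernel `e^{-2πivw}`, so the integral in `Lk` is `𝓕` at `-x/(2π)`. -/
theorem Lk_eq_re_fourier (α : ℝ) (k : ℕ) (x : ℝ) :
    Lk α k x = (((Real.sqrt (2 * Real.pi) : ℝ) : ℂ)⁻¹ *
      𝓕 (fun ξ => (Lhat α k ξ : ℂ)) (-(x / (2 * Real.pi)))).re := by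
  rw [Lk, Real.fourier_real_eq_integral_exp_smul]
  congr 4 with ξ
  rw [smul_eq_mul, mul_comm]
  congr 2
  push_cast
  field_simp

theorem exists_pow_abs_mul_abs_Lk_le {α : ℝ} (hα : α ≠ 0) {k : ℕ} (hk : 1 ≤ k) (n : ℕ) :
    ∃ M, ∀ x, |x| ^ n * |Lk α k x| ≤ M := by
  obtain ⟨M, hM⟩ := exists_pow_abs_mul_norm_fourier_ofReal_le (contDiff_Lhat hα hk)
    (hasDecayingDerivs_Lhat hα hk) n
  refine ⟨(Real.sqrt (2 * Real.pi))⁻¹ * M, fun x => ?_⟩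
  set w := -(x / (2 * Real.pi))
  have hx : |x| = 2 * Real.pi * |w| := by
    rw [abs_neg, abs_div, abs_of_pos Real.two_pi_pos]
    field_simp
  have hLk : |Lk α k x| ≤ (Real.sqrt (2 * Real.pi))⁻¹ * ‖𝓕 (fun ξ => (Lhat α k ξ : ℂ)) w‖ := by
    rw [Lk_eq_re_fourier]
    refine (Complex.abs_re_le_norm _).trans_eq ?_
    rw [norm_mul, norm_inv, Complex.norm_real, Real.norm_of_nonneg (Real.sqrt_nonneg _)]
  calc |x| ^ n * |Lk α k x|
      ≤ |x| ^ n * ((Real.sqrt (2 * Real.pi))⁻¹ * ‖𝓕 (fun ξ => (Lhat α k ξ : ℂ)) w‖) := by gcongr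
    _ = (Real.sqrt (2 * Real.pi))⁻¹ *
          ((2 * Real.pi * |w|) ^ n * ‖𝓕 (fun ξ => (Lhat α k ξ : ℂ)) w‖) := by rw [hx]; ring
    _ ≤ (Real.sqrt (2 * Real.pi))⁻¹ * M := by gcongr; exact hM w

end FundamentalFunction

theorem stmt_7_general (α : ℝ) (hα : 0 < α) (k : ℕ) (hk : 1 ≤ k) (b : ℤ → ℝ)
    (C β : ℝ)
    (hb : ∀ j : ℤ, |b j| ≤ C * (1 + |(j : ℝ)|) ^ β) :
    (∀ x : ℝ, Summable fun j : ℤ => |b j * Lk α k (x - j)|) ∧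
    ∀ K : Set ℝ, IsCompact K →
      TendstoUniformlyOn (fun (s : Finset ℤ) x => ∑ j ∈ s, b j * Lk α k (x - j))
        (fun x => ∑' j : ℤ, b j * Lk α k (x - j)) atTop K := by
  have hC : 0 ≤ C := by simpa using (abs_nonneg _).trans (hb 0)
  have hb' : ∀ j : ℤ, |b j| ≤ C * (1 + |(j : ℝ)|) ^ ⌈β⌉₊ := fun j => by
    rw [← Real.rpow_natCast]
    exact (hb j).trans (by gcongr <;> simp [Nat.le_ceil β])
  obtain ⟨D, hD⟩ := FundamentalFunction.exists_one_add_abs_pow_mul_le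
    (FundamentalFunction.exists_pow_abs_mul_abs_Lk_le hα.ne' hk) (⌈β⌉₊ + 2)
  exact FundamentalFunction.summable_and_tendstoUniformlyOn_of_decay hb' hD

/-- For a sequence b of polynomial growth, the series
`f_b(x) = Σⱼ bⱼ Lₖ(x - j)` converges absolutely for every x, uniformly on
every compact subset of ℝ. -/
theorem stmt_7 (α : ℝ) (hα : 0 < α) (k : ℕ) (hk : 1 ≤ k) (b : ℤ → ℝ)
    (C β : ℝ) (hC : 0 < C) (hβ : 0 < β)
    (hb : ∀ j : ℤ, |b j| ≤ C * (1 + |(j : ℝ)|) ^ β) :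
    (∀ x : ℝ, Summable fun j : ℤ => |b j * Lk α k (x - j)|) ∧
    ∀ K : Set ℝ, IsCompact K →
      TendstoUniformlyOn (fun (s : Finset ℤ) x => ∑ j ∈ s, b j * Lk α k (x - j))
        (fun x => ∑' j : ℤ, b j * Lk α k (x - j)) atTop K :=
  stmt_7_general α hα k hk b C β hb
end

section
/- For every ξ ∈ [−π, π] and every nonzero integer ℓ, the Fourier transform of the fundamental function satisfies |L̂_k(ξ − 2πℓ)| ≤ (2π)^{−1/2} ((π² + α²)/((2|ℓ| − 1)²π² + α²))^k, and for |ξ| < π the sharper bound with ξ² replacing π² in the numerator holds. -/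
open MeasureTheory Filter
open scoped ENNReal

lemma key_bound (α : ℝ) (hα : 0 < α) (k : ℕ) (ξ : ℝ) (hξ : |ξ| ≤ Real.pi)
    (ℓ : ℤ) (hℓ : ℓ ≠ 0) :
    |Lhat α k (ξ - 2 * Real.pi * ℓ)| ≤ (Real.sqrt (2 * Real.pi))⁻¹ *
      ((ξ ^ 2 + α ^ 2) /
        ((2 * |(ℓ : ℝ)| - 1) ^ 2 * Real.pi ^ 2 + α ^ 2)) ^ k := by
  have hπ := Real.pi_pos
  set η := ξ - 2 * Real.pi * ℓ with hη
  have hℓ1 : (1 : ℝ) ≤ |(ℓ : ℝ)| := by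
    have : (1 : ℤ) ≤ |ℓ| := Int.one_le_abs hℓ
    calc (1:ℝ) = ((1:ℤ):ℝ) := by norm_num
    _ ≤ ((|ℓ| : ℤ) : ℝ) := by exact_mod_cast this
    _ = |(ℓ:ℝ)| := by push_cast; ring
  have hc : (0:ℝ) ≤ (Real.sqrt (2 * Real.pi))⁻¹ := by positivity
  have hD : (0:ℝ) < (2 * |(ℓ : ℝ)| - 1) ^ 2 * Real.pi ^ 2 + α ^ 2 := by positivity
  -- η² ≥ (2|ℓ|-1)² π²
  have habs : (2 * |(ℓ : ℝ)| - 1) * Real.pi ≤ |η| := by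
    have h1 : |2 * Real.pi * ℓ| - |ξ| ≤ |2 * Real.pi * ℓ - ξ| :=
      abs_sub_abs_le_abs_sub _ _
    have h2 : |2 * Real.pi * ℓ - ξ| = |η| := by rw [hη, abs_sub_comm]
    have h3 : |2 * Real.pi * (ℓ:ℝ)| = 2 * Real.pi * |(ℓ:ℝ)| := by
      rw [abs_mul, abs_of_pos (by positivity : (0:ℝ) < 2 * Real.pi)]
    nlinarith
  have hpos : (0:ℝ) ≤ (2 * |(ℓ : ℝ)| - 1) * Real.pi := by nlinarith
  have hηsq : (2 * |(ℓ : ℝ)| - 1) ^ 2 * Real.pi ^ 2 ≤ η ^ 2 := by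
    nlinarith [sq_abs η, abs_nonneg η, mul_self_le_mul_self hpos habs]
  by_cases hsum : Summable fun j : ℤ => (((η - 2 * Real.pi * j) ^ 2 + α ^ 2) ^ k)⁻¹
  · have hterm : (((ξ) ^ 2 + α ^ 2) ^ k)⁻¹ ≤ S α k η := by
      have := Summable.le_tsum hsum (-ℓ) (fun j _ => by positivity)
      have he : η - 2 * Real.pi * ((-ℓ : ℤ) : ℝ) = ξ := by push_cast [hη]; ring
      rw [S]
      calc (((ξ) ^ 2 + α ^ 2) ^ k)⁻¹
          = (((η - 2 * Real.pi * ((-ℓ : ℤ) : ℝ)) ^ 2 + α ^ 2) ^ k)⁻¹ := by rw [he]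
        _ ≤ _ := this
    have hB : (0:ℝ) < ((ξ ^ 2 + α ^ 2) ^ k)⁻¹ := by positivity
    have hS : (0:ℝ) < S α k η := lt_of_lt_of_le hB hterm
    have hL : |Lhat α k η| = Lhat α k η := by
      rw [abs_of_nonneg]
      unfold Lhat
      positivity
    rw [hL]
    unfold Lhat
    calc (Real.sqrt (2 * Real.pi))⁻¹ * ((η ^ 2 + α ^ 2) ^ k)⁻¹ / S α k η
        ≤ (Real.sqrt (2 * Real.pi))⁻¹ * ((η ^ 2 + α ^ 2) ^ k)⁻¹ /
            ((ξ ^ 2 + α ^ 2) ^ k)⁻¹ := by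
          apply div_le_div_of_nonneg_left _ hB hterm
          positivity
      _ = (Real.sqrt (2 * Real.pi))⁻¹ * ((ξ ^ 2 + α ^ 2) / (η ^ 2 + α ^ 2)) ^ k := by
          rw [div_pow]
          field_simp
      _ ≤ (Real.sqrt (2 * Real.pi))⁻¹ *
            ((ξ ^ 2 + α ^ 2) /
              ((2 * |(ℓ : ℝ)| - 1) ^ 2 * Real.pi ^ 2 + α ^ 2)) ^ k := by
          apply mul_le_mul_of_nonneg_left _ hc
          apply pow_le_pow_left₀ (by positivity)
          exact div_le_div_of_nonneg_left (by positivity) hD (by linarith)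
  · have hS0 : S α k η = 0 := tsum_eq_zero_of_not_summable hsum
    rw [Lhat, hS0, div_zero, abs_zero]
    positivity

/-- Elementary bound on the tails of the Fourier transform of the
fundamental function. -/
theorem stmt_14 (α : ℝ) (hα : 0 < α) (k : ℕ) (hk : 1 ≤ k) :
    ∀ ξ ∈ Set.Icc (-Real.pi) Real.pi, ∀ ℓ : ℤ, ℓ ≠ 0 →
      |Lhat α k (ξ - 2 * Real.pi * ℓ)| ≤ (Real.sqrt (2 * Real.pi))⁻¹ *
        ((Real.pi ^ 2 + α ^ 2) /
          ((2 * |(ℓ : ℝ)| - 1) ^ 2 * Real.pi ^ 2 + α ^ 2)) ^ k ∧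
      (|ξ| < Real.pi →
        |Lhat α k (ξ - 2 * Real.pi * ℓ)| ≤ (Real.sqrt (2 * Real.pi))⁻¹ *
          ((ξ ^ 2 + α ^ 2) /
            ((2 * |(ℓ : ℝ)| - 1) ^ 2 * Real.pi ^ 2 + α ^ 2)) ^ k) := by
  intro ξ hξ ℓ hℓ
  have hξabs : |ξ| ≤ Real.pi := abs_le.mpr ⟨hξ.1, hξ.2⟩
  have hD : (0:ℝ) < (2 * |(ℓ : ℝ)| - 1) ^ 2 * Real.pi ^ 2 + α ^ 2 := by
    have : (1 : ℤ) ≤ |ℓ| := Int.one_le_abs hℓ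
    positivity
  refine ⟨?_, fun _ => key_bound α hα k ξ hξabs ℓ hℓ⟩
  calc |Lhat α k (ξ - 2 * Real.pi * ℓ)|
      ≤ (Real.sqrt (2 * Real.pi))⁻¹ *
        ((ξ ^ 2 + α ^ 2) /
          ((2 * |(ℓ : ℝ)| - 1) ^ 2 * Real.pi ^ 2 + α ^ 2)) ^ k :=
        key_bound α hα k ξ hξabs ℓ hℓ
    _ ≤ _ := by
        have hnum : ξ ^ 2 ≤ Real.pi ^ 2 := by
          nlinarith [sq_abs ξ, abs_nonneg ξ, Real.pi_pos]
        apply mul_le_mul_of_nonneg_left _ (by positivity)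
        apply pow_le_pow_left₀ (by positivity)
        exact (div_le_div_iff_of_pos_right hD).mpr (by linarith)
end
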